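/- For every n ≥ 1, SS(n) = S(n) - ∑_{i=1}^{n-1} SS(i)·S(n-i), where the convention S(0) = 1 is used. -/

import Mathlib

/-- A tournament on `n` vertices: for each pair of distinct vertices exactly one
of the two possible directed edges is present.  `dom v w` means `v` dominates `w`. -/
structure Tournament (n : ℕ) where
  dom : Fin n → Fin n → Bool
  irrefl : ∀ v, dom v v = false
  asymm : ∀ v w : Fin n, v ≠ w → dom v w = !(dom w v)

/-- The score of a vertex: the number of vertices it dominates. -/
def Tournament.score {n : ℕ} (T : Tournament n) (v : Fin n) : ℕ :=
  (Finset.univ.filter (fun w => T.dom v w = true)).card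

/-- The score sequence of a tournament: its multiset of scores, sorted nondecreasingly. -/
def Tournament.scoreList {n : ℕ} (T : Tournament n) : List ℕ :=
  Multiset.sort (Multiset.map T.score Finset.univ.val) (· ≤ ·)

/-- A strong score sequence of length `n`: nondecreasing, partial sums `> C(r,2)` for
`1 ≤ r < n`, and total sum `C(n,2)`. -/
def IsStrongScoreSeq (l : List ℕ) : Prop :=
  l.Pairwise (· ≤ ·) ∧
  (∀ r, 1 ≤ r → r < l.length → r.choose 2 < (l.take r).sum) ∧
  l.sum = l.length.choose 2

/-- `S n` is the number of distinct score sequences of `n`-vertex tournaments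
(with `S 0 = 1`, counting the empty score sequence of the 0-vertex tournament). -/
noncomputable def S (n : ℕ) : ℕ :=
  {l : List ℕ | ∃ T : Tournament n, T.scoreList = l}.ncard

/-- `SS n` is the number of distinct strong score sequences of length `n`. -/
noncomputable def SS (n : ℕ) : ℕ :=
  {l : List ℕ | l.length = n ∧ IsStrongScoreSeq l}.ncard

/-!
Landau's theorem identifies the score sequences of `n`-vertex tournaments with the nondecreasing
sequences whose first `r` terms sum to at least `C(r,2)` and whose total is `C(n,2)`: necessity
because the games among any `r` vertices give them `C(r,2)` wins; sufficiency by Hall's theorem,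
which hands every game one of the win slots of one of its endpoints, `s_v` slots for a vertex `v`
of prescribed score `s_v`, no slot being used twice.

Such a sequence splits at the first `i ≥ 1` where its partial sum equals `C(i,2)` into a strong
score sequence of length `i` and, after subtracting `i` from the remaining terms, a score
sequence of length `n - i`; this splitting is a bijection. Hence `S(n) = ∑_{i=1}^n SS(i) S(n-i)`,
whose term `i = n` is `SS(n) S(0) = SS(n)`.
-/

open Finset

theorem Nat.choose_two_add (a b : ℕ) : (a + b).choose 2 = a.choose 2 + a * b + b.choose 2 := by
  induction b with
  | zero => simp
  | succ b ih =>
    rw [← Nat.add_assoc, Nat.choose_succ_succ, Nat.choose_succ_succ, ih]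
    simp only [Nat.choose_one_right]
    ring

theorem Nat.succ_choose_two (a : ℕ) : (a + 1).choose 2 = a.choose 2 + a := by
  simpa using Nat.choose_two_add a 1

theorem List.sum_map_add_const (l : List ℕ) (c : ℕ) :
    (l.map (· + c)).sum = l.sum + l.length * c := by
  simp [List.sum_map_add]

theorem List.Pairwise.sum_take_card_le {α : Type*} [AddCommMonoid α] [PartialOrder α]
    [IsOrderedAddMonoid α] {l : List α} (hl : l.Pairwise (· ≤ ·))
    (A : Finset (Fin l.length)) :
    (l.take #A).sum ≤ ∑ i ∈ A, l.get i := by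
  induction A using Finset.induction_on_max with
  | empty => simp
  | insert a A hlt ih =>
    have hA : #A ≤ a := by
      simpa using card_le_card (fun x hx => mem_Iio.2 (hlt x hx) : A ⊆ Iio a)
    rw [card_insert_of_notMem (fun ha => lt_irrefl a (hlt a ha)), sum_insert
      (fun ha => lt_irrefl a (hlt a ha)), List.sum_take_succ _ _ (hA.trans_lt a.2), add_comm]
    exact add_le_add (hl.rel_get_of_le (a := ⟨#A, hA.trans_lt a.2⟩) hA) ih

theorem Multiset.exists_le_map_eq_of_le_map {α β : Type*} {f : α → β} {s : Multiset α}
    {u : Multiset β} (h : u ≤ s.map f) : ∃ t ≤ s, t.map f = u := by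
  induction s using Quotient.inductionOn with | h ls => ?_
  induction u using Quotient.inductionOn with | h lu => ?_
  obtain ⟨l, hperm, hsub⟩ := Multiset.coe_le.1 h
  obtain ⟨l', hsub', rfl⟩ := List.sublist_map_iff.1 hsub
  exact ⟨l', Multiset.coe_le.2 hsub'.subperm, Quot.sound hperm⟩

/-- Landau's conditions; by Landau's theorem they characterize the score sequences of
tournaments. -/
def IsLandauSeq (l : List ℕ) : Prop :=
  l.Pairwise (· ≤ ·) ∧ (∀ r ≤ l.length, r.choose 2 ≤ (l.take r).sum) ∧
    l.sum = l.length.choose 2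

theorem IsStrongScoreSeq.isLandauSeq {l : List ℕ} (h : IsStrongScoreSeq l) : IsLandauSeq l := by
  obtain ⟨hsort, hlt, hsum⟩ := h
  refine ⟨hsort, fun r hr => ?_, hsum⟩
  rcases Nat.eq_zero_or_pos r with rfl | hr0
  · simp
  rcases hr.lt_or_eq with hr | rfl
  · exact (hlt r hr0 hr).le
  · rw [List.take_length, hsum]

namespace IsLandauSeq

theorem lt_length_of_mem {l : List ℕ} (hl : IsLandauSeq l) {x : ℕ} (hx : x ∈ l) :
    x < l.length := by
  obtain ⟨i, hi, rfl⟩ := List.mem_iff_getElem.1 hx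
  obtain ⟨m, hm⟩ : ∃ m, l.length = m + 1 := ⟨l.length - 1, by omega⟩
  have hlast : l.sum = (l.take m).sum + l[m] := by
    rw [← List.sum_take_succ l m (by omega), ← hm, List.take_length]
  have htotal : l.sum = m.choose 2 + m := by rw [hl.2.2, hm, Nat.succ_choose_two]
  have hprefix := hl.2.1 m (by omega)
  have hmono : l[i] ≤ l[m] :=
    hl.1.rel_get_of_le (a := ⟨i, hi⟩) (b := ⟨m, by omega⟩) (Fin.mk_le_mk.2 (by omega))
  omega

theorem le_of_mem_drop {l : List ℕ} (hl : IsLandauSeq l) {i x : ℕ}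
    (htight : (l.take i).sum = i.choose 2) (hx : x ∈ l.drop i) : i ≤ x := by
  obtain ⟨j, hj, rfl⟩ := List.mem_iff_getElem.1 hx
  rw [List.length_drop] at hj
  have hi : i < l.length := by omega
  have hsucc := List.sum_take_succ l i hi
  have hprefix := hl.2.1 (i + 1) hi
  rw [Nat.succ_choose_two] at hprefix
  have hmono : l[i] ≤ l[i + j] :=
    hl.1.rel_get_of_le (a := ⟨i, hi⟩) (b := ⟨i + j, by omega⟩) (Fin.mk_le_mk.2 (by omega))
  rw [List.getElem_drop]
  omega

end IsLandauSeq

theorem List.sum_take_length_add_append_map_add (a b : List ℕ) (c : ℕ) {k : ℕ}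
    (hk : k ≤ b.length) :
    ((a ++ b.map (· + c)).take (a.length + k)).sum = a.sum + (b.take k).sum + k * c := by
  rw [List.take_length_add_append, List.sum_append, ← List.map_take, List.sum_map_add_const,
    List.length_take, min_eq_left hk, add_assoc]

theorem isLandauSeq_append_map_add_iff {a b : List ℕ} (ha : a.sum = a.length.choose 2) :
    IsLandauSeq (a ++ b.map (· + a.length)) ↔ IsLandauSeq a ∧ IsLandauSeq b := by
  set i := a.length
  have hlen : (a ++ b.map (· + i)).length = i + b.length := by simp [i]
  have htake_b (k : ℕ) (hk : k ≤ b.length) :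
      ((a ++ b.map (· + i)).take (i + k)).sum = i.choose 2 + (b.take k).sum + k * i := by
    rw [List.sum_take_length_add_append_map_add a b i hk, ha]
  have hsum : (a ++ b.map (· + i)).sum = i.choose 2 + b.sum + b.length * i := by
    have h := htake_b b.length le_rfl
    rwa [← hlen, List.take_length, List.take_length] at h
  have hpairwise_b : (b.map (· + i)).Pairwise (· ≤ ·) ↔ b.Pairwise (· ≤ ·) := by
    simp [List.pairwise_map]
  constructor
  · rintro ⟨hsort, hprefix, htotal⟩
    rw [List.pairwise_append] at hsort
    refine ⟨⟨hsort.1, fun r hr => ?_, ha⟩, hpairwise_b.1 hsort.2.1, fun k hk => ?_, ?_⟩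
    · rw [← List.take_append_of_le_length hr]
      exact hprefix r (by omega)
    · have h := hprefix (i + k) (by omega)
      rw [htake_b k hk, Nat.choose_two_add, Nat.mul_comm k] at h
      omega
    · rw [hsum, hlen, Nat.choose_two_add, Nat.mul_comm b.length] at htotal
      omega
  · rintro ⟨haL, hsort_b, hprefix_b, htotal_b⟩
    refine ⟨List.pairwise_append.2 ⟨haL.1, hpairwise_b.2 hsort_b, ?_⟩, fun r hr => ?_, ?_⟩
    · simp only [List.mem_map]
      rintro x hx _ ⟨y, -, rfl⟩
      exact (haL.lt_length_of_mem hx).le.trans (Nat.le_add_left i y)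
    · rcases le_or_gt r i with hri | hri
      · rw [List.take_append_of_le_length hri]
        exact haL.2.1 r hri
      · obtain ⟨k, rfl⟩ := Nat.exists_eq_add_of_lt hri
        have h := hprefix_b (k + 1) (by omega)
        rw [Nat.add_assoc, htake_b (k + 1) (by omega), Nat.choose_two_add,
          Nat.mul_comm (k + 1)]
        omega
    · rw [hsum, hlen, Nat.choose_two_add, htotal_b, Nat.mul_comm b.length]
      omega

theorem le_of_isStrongScoreSeq_take {l : List ℕ} {i j : ℕ} (hj : 1 ≤ j) (hi : i ≤ l.length)
    (hti : IsStrongScoreSeq (l.take i)) (htj : IsStrongScoreSeq (l.take j)) : i ≤ j := by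
  by_contra! hji
  have h := hti.2.1 j hj (by simp; omega)
  rw [List.take_take, min_eq_left hji.le, htj.2.2, List.length_take,
    min_eq_left (by omega)] at h
  exact lt_irrefl _ h

theorem IsLandauSeq.exists_isStrongScoreSeq_take {l : List ℕ} (hl : IsLandauSeq l)
    (hne : l ≠ []) : ∃ i, 1 ≤ i ∧ i ≤ l.length ∧ IsStrongScoreSeq (l.take i) := by
  have htight : ∃ i, 1 ≤ i ∧ (l.take i).sum = i.choose 2 :=
    ⟨l.length, List.length_pos_iff.2 hne, by rw [List.take_length, hl.2.2]⟩
  obtain ⟨hi1, hitight⟩ := Nat.find_spec htight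
  set i := Nat.find htight
  have hil : i ≤ l.length := Nat.find_min' htight ⟨List.length_pos_iff.2 hne, by
    rw [List.take_length, hl.2.2]⟩
  have hlen : (l.take i).length = i := by simp [hil]
  refine ⟨i, hi1, hil, hl.1.sublist (List.take_sublist i l), fun r hr1 hri => ?_, ?_⟩
  · rw [hlen] at hri
    rw [List.take_take, min_eq_left hri.le]
    exact (hl.2.1 r (by omega)).lt_of_ne fun h => Nat.find_min htight hri ⟨hr1, h.symm⟩
  · rw [hlen, hitight]

namespace Tournament

variable {n : ℕ} (T : Tournament n)

instance : Finite (Tournament n) :=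
  Finite.of_injective Tournament.dom fun T T' h => by cases T; cases T'; congr

theorem card_filter_dom (A : Finset (Fin n)) :
    #{p ∈ A ×ˢ A | T.dom p.1 p.2} = (#A).choose 2 := by
  have hoff : {p ∈ A ×ˢ A | T.dom p.1 p.2} = {p ∈ A.offDiag | T.dom p.1 p.2} := by
    ext ⟨v, w⟩
    simp only [mem_filter, mem_product, mem_offDiag, and_congr_left_iff]
    intro h
    refine ⟨fun hvw => ⟨hvw.1, hvw.2, ?_⟩, fun hvw => ⟨hvw.1, hvw.2.1⟩⟩
    rintro rfl
    simp [T.irrefl] at h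
  have hswap : #{p ∈ A.offDiag | ¬T.dom p.1 p.2} = #{p ∈ A.offDiag | T.dom p.1 p.2} := by
    refine card_nbij' Prod.swap Prod.swap ?_ ?_ (fun _ _ => rfl) (fun _ _ => rfl) <;>
    · rintro ⟨v, w⟩ h
      simp only [coe_filter, Set.mem_ofPred_eq, mem_offDiag] at h ⊢
      have hvw := T.asymm v w h.1.2.2
      exact ⟨⟨h.1.2.1, h.1.1, Ne.symm h.1.2.2⟩, by cases hd : T.dom w v <;> simp_all⟩
  have hsplit := card_filter_add_card_filter_not (s := A.offDiag)
    (fun p => T.dom p.1 p.2 = true)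
  rw [hswap, offDiag_card] at hsplit
  rw [hoff, Nat.choose_two_right, Nat.mul_sub_one]
  omega

theorem sum_card_filter_dom (A : Finset (Fin n)) :
    ∑ v ∈ A, #{w ∈ A | T.dom v w} = (#A).choose 2 := by
  rw [← T.card_filter_dom A, card_filter, sum_product]
  simp only [card_filter]

theorem choose_two_card_le_sum_score (A : Finset (Fin n)) :
    (#A).choose 2 ≤ ∑ v ∈ A, T.score v :=
  T.sum_card_filter_dom A ▸
    sum_le_sum fun _ _ => card_le_card (filter_subset_filter _ A.subset_univ)

theorem sum_score : ∑ v, T.score v = n.choose 2 := by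
  simpa [score] using T.sum_card_filter_dom univ

theorem coe_scoreList : (T.scoreList : Multiset ℕ) = univ.val.map T.score :=
  Multiset.sort_eq _ _

theorem length_scoreList : T.scoreList.length = n := by
  simpa using congrArg Multiset.card T.coe_scoreList

theorem choose_two_le_sum_take_scoreList {r : ℕ} (hr : r ≤ n) :
    r.choose 2 ≤ (T.scoreList.take r).sum := by
  have hle : ((T.scoreList.take r : List ℕ) : Multiset ℕ) ≤ univ.val.map T.score :=
    T.coe_scoreList ▸ Multiset.coe_le.2 (List.take_sublist r _).subperm
  obtain ⟨t, ht, hmap⟩ := Multiset.exists_le_map_eq_of_le_map hle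
  have hcard : #(⟨t, Multiset.nodup_of_le ht univ.nodup⟩ : Finset (Fin n)) = r := by
    simpa [T.length_scoreList, hr] using congrArg Multiset.card hmap
  have hsum := T.choose_two_card_le_sum_score ⟨t, Multiset.nodup_of_le ht univ.nodup⟩
  rwa [hcard, sum_eq_multiset_sum, hmap, Multiset.sum_coe] at hsum

theorem isLandauSeq_scoreList : IsLandauSeq T.scoreList := by
  refine ⟨Multiset.pairwise_sort _ _,
    fun r hr => T.choose_two_le_sum_take_scoreList (T.length_scoreList ▸ hr), ?_⟩
  rw [T.length_scoreList, ← T.sum_score, sum_eq_multiset_sum, ← T.coe_scoreList,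
    Multiset.sum_coe]

end Tournament

theorem card_filter_sigma_fst_mem {V : Type*} [Fintype V] [DecidableEq V] (s : V → ℕ)
    (A : Finset V) : #{x : Σ v, Fin (s v) | x.1 ∈ A} = ∑ v ∈ A, s v := by
  have h : ({x : Σ v, Fin (s v) | x.1 ∈ A} : Finset _) = A.sigma fun _ => univ := by
    ext x
    simp
  simp [h, card_sigma]

theorem exists_injective_slot_of_choose_two_le_sum {V : Type*} [Fintype V] [DecidableEq V]
    (s : V → ℕ) (hs : ∀ A : Finset V, (#A).choose 2 ≤ ∑ v ∈ A, s v) :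
    ∃ f : {e : Sym2 V // ¬e.IsDiag} → Σ v, Fin (s v),
      Function.Injective f ∧ ∀ e : {e : Sym2 V // ¬e.IsDiag}, (f e).1 ∈ e.1 := by
  obtain ⟨f, hf, hmem⟩ := (all_card_le_biUnion_card_iff_exists_injective
    fun e : {e : Sym2 V // ¬e.IsDiag} => ({x : Σ v, Fin (s v) | x.1 ∈ e.1} : Finset _)).1
    fun E => by
      set A : Finset V := {v | ∃ e ∈ E, v ∈ (e : Sym2 V)}
      have hslots : E.biUnion (fun e => ({x : Σ v, Fin (s v) | x.1 ∈ e.1} : Finset _)) =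
          ({x : Σ v, Fin (s v) | x.1 ∈ A} : Finset _) := by
        ext x
        simp [A]
      have hedges : E.map (Function.Embedding.subtype _) ⊆ A.offDiag.image Sym2.mk.uncurry := by
        intro e hmem
        obtain ⟨⟨e, hdiag⟩, hE, rfl⟩ := mem_map.1 hmem
        induction e using Sym2.ind with | h v w => ?_
        refine mem_image.2
          ⟨(v, w), mem_offDiag.2 ⟨?_, ?_, Sym2.mk_isDiag_iff.not.1 hdiag⟩, rfl⟩
        · exact mem_filter.2 ⟨mem_univ _, _, hE, Sym2.mem_mk_left v w⟩
        · exact mem_filter.2 ⟨mem_univ _, _, hE, Sym2.mem_mk_right v w⟩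
      calc #E = #(E.map (Function.Embedding.subtype _)) := (card_map _).symm
        _ ≤ (#A).choose 2 := (card_le_card hedges).trans (Sym2.card_image_offDiag A).le
        _ ≤ ∑ v ∈ A, s v := hs A
        _ = _ := by rw [hslots, card_filter_sigma_fst_mem]
  exact ⟨f, hf, fun e => by simpa using hmem e⟩

namespace Tournament

variable {n : ℕ}

/-- The tournament in which the game `e = s(v, w)` is won by `o e`. -/
def ofWinner (o : {e : Sym2 (Fin n) // ¬e.IsDiag} → Fin n)
    (ho : ∀ e : {e : Sym2 (Fin n) // ¬e.IsDiag}, o e ∈ e.1) : Tournament n where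
  dom v w := if h : v = w then false else o ⟨s(v, w), Sym2.mk_isDiag_iff.not.2 h⟩ = v
  irrefl v := dif_pos rfl
  asymm v w h := by
    have hswap : (⟨s(w, v), Sym2.mk_isDiag_iff.not.2 (Ne.symm h)⟩ :
        {e : Sym2 (Fin n) // ¬e.IsDiag}) = ⟨s(v, w), Sym2.mk_isDiag_iff.not.2 h⟩ :=
      Subtype.ext Sym2.eq_swap
    rw [dif_neg h, dif_neg (Ne.symm h), hswap]
    rcases Sym2.mem_iff.1 (ho ⟨s(v, w), Sym2.mk_isDiag_iff.not.2 h⟩) with hv | hw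
    · simp [hv, h]
    · simp [hw, Ne.symm h]

theorem score_ofWinner_le (o : {e : Sym2 (Fin n) // ¬e.IsDiag} → Fin n)
    (ho : ∀ e : {e : Sym2 (Fin n) // ¬e.IsDiag}, o e ∈ e.1) (v : Fin n) :
    (ofWinner o ho).score v ≤ #{e | o e = v} := by
  refine card_le_card_of_surjOn (fun e => Sym2.Mem.other (ho e)) fun w hw => ?_
  have hdom : (ofWinner o ho).dom v w = true := (mem_filter.1 hw).2
  have hvw : v ≠ w := by
    rintro rfl
    simp [(ofWinner o ho).irrefl] at hdom
  simp only [ofWinner, dif_neg hvw, decide_eq_true_eq] at hdom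
  refine ⟨⟨s(v, w), Sym2.mk_isDiag_iff.not.2 hvw⟩, by simpa using hdom, ?_⟩
  have hspec := Sym2.other_spec (ho ⟨s(v, w), Sym2.mk_isDiag_iff.not.2 hvw⟩)
  dsimp only
  generalize Sym2.Mem.other _ = x at hspec ⊢
  rw [hdom] at hspec
  exact Sym2.congr_right.1 hspec

theorem exists_score_le (s : Fin n → ℕ)
    (hs : ∀ A : Finset (Fin n), (#A).choose 2 ≤ ∑ v ∈ A, s v) :
    ∃ T : Tournament n, ∀ v, T.score v ≤ s v := by
  obtain ⟨f, hf, hmem⟩ := exists_injective_slot_of_choose_two_le_sum s hs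
  refine ⟨ofWinner (fun e => (f e).1) hmem, fun v => (score_ofWinner_le _ hmem v).trans ?_⟩
  calc #{e | (f e).1 = v} ≤ #{x : Σ v, Fin (s v) | x.1 ∈ ({v} : Finset (Fin n))} :=
        card_le_card_of_injOn f (fun e he => by simpa using he) hf.injOn
    _ = s v := by rw [card_filter_sigma_fst_mem, sum_singleton]

end Tournament

theorem IsLandauSeq.exists_scoreList_eq {l : List ℕ} (hl : IsLandauSeq l) :
    ∃ T : Tournament l.length, T.scoreList = l := by
  have hs (A : Finset (Fin l.length)) : (#A).choose 2 ≤ ∑ v ∈ A, l.get v :=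
    (hl.2.1 _ (by simpa using card_le_univ A)).trans (hl.1.sum_take_card_le A)
  obtain ⟨T, hle⟩ := Tournament.exists_score_le l.get hs
  have hsum : ∑ v, T.score v = ∑ v, l.get v := by
    rw [T.sum_score, ← hl.2.2, ← List.sum_ofFn, List.ofFn_get]
  have hscore : T.score = l.get :=
    funext fun v => (sum_eq_sum_iff_of_le fun v _ => hle v).1 hsum v (mem_univ v)
  refine ⟨T, ?_⟩
  rw [Tournament.scoreList, hscore, Fin.univ_val_map, List.ofFn_get, Multiset.coe_sort,
    List.mergeSort_eq_self _ hl.1]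

theorem Tournament.exists_scoreList_eq_iff {n : ℕ} {l : List ℕ} :
    (∃ T : Tournament n, T.scoreList = l) ↔ l.length = n ∧ IsLandauSeq l := by
  constructor
  · rintro ⟨T, rfl⟩
    exact ⟨T.length_scoreList, T.isLandauSeq_scoreList⟩
  · rintro ⟨rfl, hl⟩
    exact hl.exists_scoreList_eq

theorem ncard_isLandauSeq_of_isStrongScoreSeq_take {n i : ℕ} (hin : i ≤ n) :
    {l : List ℕ | l.length = n ∧ IsLandauSeq l ∧ IsStrongScoreSeq (l.take i)}.ncard =
      {a : List ℕ | a.length = i ∧ IsStrongScoreSeq a}.ncard *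
        {b : List ℕ | b.length = n - i ∧ IsLandauSeq b}.ncard := by
  set join : List ℕ × List ℕ → List ℕ := fun p => p.1 ++ p.2.map (· + i)
  have hinj : Set.InjOn join ({a | a.length = i ∧ IsStrongScoreSeq a} ×ˢ
      {b | b.length = n - i ∧ IsLandauSeq b}) := by
    rintro ⟨a, b⟩ ⟨⟨ha, -⟩, -⟩ ⟨a', b'⟩ ⟨⟨ha', -⟩, -⟩ h
    obtain ⟨rfl, hb⟩ := List.append_inj h (ha.trans ha'.symm)
    exact Prod.ext rfl (List.map_injective_iff.2 (add_left_injective i) hb)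
  rw [← Set.ncard_prod, ← hinj.ncard_image]
  congr 1
  ext l
  simp only [Set.mem_image, Set.mem_prod, Set.mem_ofPred_eq, Prod.exists, join]
  constructor
  · rintro ⟨rfl, hl, hstrong⟩
    have hlen : (l.take i).length = i := by simp [hin]
    have htight : (l.take i).sum = i.choose 2 := by rw [hstrong.2.2, hlen]
    have hsplit : l = l.take i ++ ((l.drop i).map (· - i)).map (· + i) := by
      rw [List.map_map]
      conv_lhs => rw [← List.take_append_drop i l]
      congr 1
      refine (List.map_congr_left fun x hx => ?_).trans (List.map_id _) |>.symm
      exact Nat.sub_add_cancel (hl.le_of_mem_drop htight hx)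
    have hsplit_landau :
        IsLandauSeq (l.take i ++ ((l.drop i).map (· - i)).map (· + (l.take i).length)) := by
      rwa [hlen, ← hsplit]
    refine ⟨l.take i, (l.drop i).map (· - i), ⟨⟨hlen, hstrong⟩, by simp,
      ((isLandauSeq_append_map_add_iff (by rw [hlen]; exact htight)).1 hsplit_landau).2⟩,
      hsplit.symm⟩
  · rintro ⟨a, b, ⟨⟨rfl, ha⟩, hb_len, hb⟩, rfl⟩
    refine ⟨by simp [hb_len]; omega,
      (isLandauSeq_append_map_add_iff ha.2.2).2 ⟨ha.isLandauSeq, hb⟩, ?_⟩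
    rwa [List.take_left]

theorem Tournament.range_scoreList (n : ℕ) :
    Set.range (Tournament.scoreList (n := n)) = {l | l.length = n ∧ IsLandauSeq l} :=
  Set.ext fun _ => Tournament.exists_scoreList_eq_iff

theorem S_eq_ncard (n : ℕ) : S n = {l : List ℕ | l.length = n ∧ IsLandauSeq l}.ncard := by
  rw [← Tournament.range_scoreList]
  rfl

theorem finite_setOf_isLandauSeq (n : ℕ) :
    {l : List ℕ | l.length = n ∧ IsLandauSeq l}.Finite :=
  Tournament.range_scoreList n ▸ Set.finite_range _

theorem S_zero : S 0 = 1 := by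
  rw [S_eq_ncard, Set.ncard_eq_one]
  refine ⟨[], Set.ext fun l => ⟨fun hl => List.length_eq_zero_iff.1 hl.1, ?_⟩⟩
  rintro rfl
  exact ⟨rfl, List.Pairwise.nil, fun r hr => by simp [Nat.le_zero.1 hr], rfl⟩

theorem S_eq_sum {n : ℕ} (hn : 1 ≤ n) : S n = ∑ i ∈ Icc 1 n, SS i * S (n - i) := by
  set part : ℕ → Set (List ℕ) := fun i =>
    {l | l.length = n ∧ IsLandauSeq l ∧ IsStrongScoreSeq (l.take i)}
  have hcover :
      {l : List ℕ | l.length = n ∧ IsLandauSeq l} = ⋃ i ∈ (Icc 1 n : Set ℕ), part i := by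
    ext l
    simp only [Set.mem_iUnion, Set.mem_ofPred_eq, coe_Icc, Set.mem_Icc, part]
    refine ⟨fun ⟨hlen, hl⟩ => ?_, fun ⟨i, _, hlen, hl, _⟩ => ⟨hlen, hl⟩⟩
    obtain ⟨i, hi1, hil, hi⟩ :=
      hl.exists_isStrongScoreSeq_take (List.ne_nil_of_length_pos (by omega))
    exact ⟨i, ⟨hi1, hlen ▸ hil⟩, hlen, hl, hi⟩
  have hdisj : (Icc 1 n : Set ℕ).PairwiseDisjoint part := by
    intro i hi j hj hij
    refine Set.disjoint_left.2 fun l ⟨hlen, _, hli⟩ ⟨_, _, hlj⟩ => hij (le_antisymm ?_ ?_)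
    · exact le_of_isStrongScoreSeq_take (mem_Icc.1 hj).1 (hlen ▸ (mem_Icc.1 hi).2) hli hlj
    · exact le_of_isStrongScoreSeq_take (mem_Icc.1 hi).1 (hlen ▸ (mem_Icc.1 hj).2) hlj hli
  have hfinite : ∀ i ∈ (Icc 1 n : Set ℕ), (part i).Finite := fun i _ =>
    (finite_setOf_isLandauSeq n).subset fun l hl => ⟨hl.1, hl.2.1⟩
  rw [S_eq_ncard, hcover, (Icc 1 n).finite_toSet.ncard_biUnion hfinite hdisj,
    finsum_mem_coe_finset]
  refine sum_congr rfl fun i hi => ?_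
  rw [ncard_isLandauSeq_of_isStrongScoreSeq_take (mem_Icc.1 hi).2, SS, S_eq_ncard]

/-- `SS(n) = S(n) - ∑_{i=1}^{n-1} SS(i)·S(n-i)` for `n ≥ 1`. -/
theorem SS_recurrence (n : ℕ) (hn : 1 ≤ n) :
    (SS n : ℤ) = (S n : ℤ) - ∑ i ∈ Finset.Icc 1 (n - 1), (SS i : ℤ) * (S (n - i) : ℤ) := by
  obtain ⟨m, rfl⟩ : ∃ m, n = m + 1 := ⟨n - 1, by omega⟩
  rw [S_eq_sum hn, sum_Icc_succ_top (by omega), Nat.sub_self, S_zero, Nat.add_sub_cancel]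
  push_cast
  ring
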